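/- Let n, m, ι be finite types, S₀ : Matrix n m ℂ with S₀† * S₀ = 1, P₀ := S₀ * S₀†, L₀ : Matrix n n ℂ with L₀ * S₀ = 0, and (M_μ)_{μ∈ι} a family in Matrix n n ℂ; define R(A) := Σ_μ M_μ * A * M_μ†. Assume: R(L₀ * B * L₀† − (1/2)(L₀† * L₀ * B + B * L₀† * L₀)) = 0 for all B; R(B * P₀) = P₀ * B * P₀ and R(P₀ * B) = P₀ * B * P₀ for all B; Σ_μ M_μ† * P₀ * M_μ = 1. Let X : Matrix n n ℂ be Hermitian with L₀† * L₀ * X = X * (L₀† * L₀) = 1 − P₀ and X * P₀ = P₀ * X = 0, and let H₁ : Matrix n n ℂ be Hermitian. Define C₁ := 2XH₁P₀ + 2P₀H₁X, K₁(σ) := −i[C₁, S₀σS₀†], 𝓛_{s,1}(ρ) := −i[S₀†H₁S₀, ρ], 𝓛₁(A) := −i[H₁, A], and B_μ := 2 * S₀† * M_μ * L₀ * X * H₁ * S₀. Then for every ρ : Matrix m m ℂ, S₀† * R(𝓛₁(K₁(ρ)) − K₁(𝓛_{s,1}(ρ))) * S₀ = Σ_μ B_μ * ρ * B_μ† − (1/2)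 * ((Σ_μ B_μ† * B_μ) * ρ + ρ * (Σ_μ B_μ† * B_μ)). (Lemma 3: the second-order slow dynamics 𝓛_{s,2} admits a Lindbladian formulation with jump operators B_μ = 2S₀†M_μL₀(L₀†L₀)⁻¹H₁S₀.) -/

import Mathlib

/-!
Since `(-i)² = -1`, the second-order generator is `⁅C₁, ⁅P₀H₁P₀, T⁆⁆ - ⁅H₁, ⁅C₁, T⁆⁆` with
`T = S₀ρS₀†`. Expanding with `C₁ = 2(XH₁P₀ + P₀H₁X)`, `P₀T = TP₀ = T` and `XP₀ = P₀X = 0`, and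
writing `1 - P₀ = L₀†L₀X = XL₀†L₀`, it becomes `2(L₀†L₀Y + YL₀†L₀) - 2(ET + TF)` with
`Y = XH₁TH₁X`. The limit map `R` turns the first part into `4 R(L₀YL₀†)`, because `R` kills the
fast dissipator, and the second into `P₀(ET + TF)P₀`. Compressing with `S₀` gives
`4 S₀†R(L₀YL₀†)S₀ - 2{G, ρ}` with `G = S₀†H₁XH₁S₀`; the first term is `∑ B_μρB_μ†`, and
`∑ B_μ†B_μ = 4G` follows from `∑ M_μ†P₀M_μ = 1` and `X(L₀†L₀)X = X`.
-/

open Matrix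

theorem lie_lie_sub_lie_lie {A : Type*} [Ring A] {P Q X H T C : A} (hP : IsIdempotentElem P)
    (hQX : Q * X = 1 - P) (hXQ : X * Q = 1 - P) (hXP : X * P = 0) (hPX : P * X = 0)
    (hPT : P * T = T) (hTP : T * P = T) (hC : C = 2 • (X * H * P) + 2 • (P * H * X)) :
    ⁅C, ⁅P * H * P, T⁆⁆ - ⁅H, ⁅C, T⁆⁆
      = 2 • (Q * (X * H * T * H * X) + X * H * T * H * X * Q)
        - 2 • ((H * X * H - X * (H * P * H)) * T + T * (H * X * H - H * P * H * X)) := by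
  have hXT : X * T = 0 := by rw [← hPT, ← mul_assoc, hXP, zero_mul]
  have hTX : T * X = 0 := by rw [← hTP, mul_assoc, hPX, mul_zero]
  have cancel {a b c : A} (h : a * b = c) (z : A) : a * (b * z) = c * z := by rw [← mul_assoc, h]
  rw [show Q * (X * H * T * H * X) = (1 - P) * H * T * H * X by simp only [← mul_assoc, hQX],
    mul_assoc _ X Q, hXQ]
  subst hC
  simp only [Ring.lie_def, mul_sub, sub_mul, mul_add, add_mul, mul_one, one_mul, smul_mul_assoc,
    mul_smul_comm, mul_assoc, hXT, cancel hP.eq, cancel hXP, cancel hPX, cancel hXT,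
    cancel hTX, cancel hPT, hPT, cancel hTP, zero_mul, mul_zero, smul_zero]
  abel

namespace Matrix

variable {n m l ι α : Type*} [Fintype n]

section Isometry

variable [Fintype m] [DecidableEq m] {S : Matrix n m α}

section Semiring

variable [Semiring α] [StarRing α]

theorem isIdempotentElem_mul_conjTranspose (hS : Sᴴ * S = 1) : IsIdempotentElem (S * Sᴴ) := by
  rw [IsIdempotentElem, Matrix.mul_assoc, ← Matrix.mul_assoc Sᴴ, hS, Matrix.one_mul]

theorem mul_conjTranspose_mul_conj (hS : Sᴴ * S = 1) (ρ : Matrix m m α) :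
    S * Sᴴ * (S * ρ * Sᴴ) = S * ρ * Sᴴ := by
  rw [Matrix.mul_assoc, ← Matrix.mul_assoc Sᴴ, ← Matrix.mul_assoc Sᴴ, hS, Matrix.one_mul,
    Matrix.mul_assoc]

theorem conj_mul_mul_conjTranspose (hS : Sᴴ * S = 1) (ρ : Matrix m m α) :
    S * ρ * Sᴴ * (S * Sᴴ) = S * ρ * Sᴴ := by
  rw [← Matrix.mul_assoc, Matrix.mul_assoc _ Sᴴ, hS, Matrix.mul_one]

theorem mul_eq_zero_of_mul_mul_conjTranspose_eq_zero (hS : Sᴴ * S = 1) {X : Matrix l n α}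
    (hX : X * (S * Sᴴ) = 0) : X * S = 0 := by
  rw [← Matrix.mul_one (X * S), ← hS, ← Matrix.mul_assoc, Matrix.mul_assoc X, hX,
    Matrix.zero_mul]

theorem conjTranspose_mul_eq_zero_of_mul_conjTranspose_mul_eq_zero (hS : Sᴴ * S = 1)
    {X : Matrix n l α} (hX : S * Sᴴ * X = 0) : Sᴴ * X = 0 := by
  rw [← Matrix.one_mul (Sᴴ * X), ← hS, Matrix.mul_assoc, ← Matrix.mul_assoc S, hX,
    Matrix.mul_zero]

end Semiring

section Ring

variable [Ring α] [StarRing α]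

theorem conjTranspose_mul_sub_mul_mul_eq {X : Matrix n n α} (hS : Sᴴ * S = 1)
    (hX : S * Sᴴ * X = 0) (Y Z : Matrix n n α) : Sᴴ * (Y - X * Z) * S = Sᴴ * Y * S := by
  rw [Matrix.mul_sub, Matrix.sub_mul, ← Matrix.mul_assoc,
    conjTranspose_mul_eq_zero_of_mul_conjTranspose_mul_eq_zero hS hX, Matrix.zero_mul,
    Matrix.zero_mul, sub_zero]

theorem conjTranspose_mul_sub_mul_mul_eq' {X : Matrix n n α} (hS : Sᴴ * S = 1)
    (hX : X * (S * Sᴴ) = 0) (Y Z : Matrix n n α) : Sᴴ * (Y - Z * X) * S = Sᴴ * Y * S := by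
  rw [Matrix.mul_sub, Matrix.sub_mul, Matrix.mul_assoc _ (Z * X), Matrix.mul_assoc Z,
    mul_eq_zero_of_mul_mul_conjTranspose_eq_zero hS hX, Matrix.mul_zero, Matrix.mul_zero, sub_zero]

theorem conj_lie_eq_lie_conj [DecidableEq n] (hS : Sᴴ * S = 1) (H : Matrix n n α)
    (ρ : Matrix m m α) : S * ⁅Sᴴ * H * S, ρ⁆ * Sᴴ = ⁅S * Sᴴ * H * (S * Sᴴ), S * ρ * Sᴴ⁆ := by
  have cancel (Z : Matrix m n α) : Sᴴ * (S * Z) = Z := by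
    rw [← Matrix.mul_assoc, hS, Matrix.one_mul]
  simp only [Ring.lie_def, Matrix.mul_sub, Matrix.sub_mul, Matrix.mul_assoc, cancel]

end Ring

end Isometry

section Kraus

variable [Fintype ι] [CommSemiring α] [StarRing α]

def krausMap (M : ι → Matrix n n α) : Matrix n n α →ₗ[α] Matrix n n α where
  toFun A := ∑ μ, M μ * A * (M μ)ᴴ
  map_add' A B := by simp only [Matrix.mul_add, Matrix.add_mul, Finset.sum_add_distrib]
  map_smul' c A := by
    simp only [Matrix.mul_smul, Matrix.smul_mul, Finset.smul_sum, RingHom.id_apply]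

theorem krausMap_apply (M : ι → Matrix n n α) (A : Matrix n n α) :
    krausMap M A = ∑ μ, M μ * A * (M μ)ᴴ := rfl

theorem sum_mul_mul_conjTranspose_eq_krausMap [Fintype l] (M : ι → Matrix n n α)
    (A : Matrix m n α) (V : Matrix n l α) (ρ : Matrix l l α) :
    ∑ μ, A * M μ * V * ρ * (A * M μ * V)ᴴ = A * krausMap M (V * ρ * Vᴴ) * Aᴴ := by
  simp only [krausMap_apply, Matrix.mul_sum, Matrix.sum_mul, conjTranspose_mul, Matrix.mul_assoc]

theorem sum_conjTranspose_mul_self_eq [Fintype m] (M : ι → Matrix n n α) (A : Matrix m n α)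
    (V : Matrix n l α) :
    ∑ μ, (A * M μ * V)ᴴ * (A * M μ * V) = Vᴴ * (∑ μ, (M μ)ᴴ * (Aᴴ * A) * M μ) * V := by
  simp only [Matrix.mul_sum, Matrix.sum_mul, conjTranspose_mul, Matrix.mul_assoc]

variable [Fintype m] {S : Matrix n m α} {L X H : Matrix n n α} {M : ι → Matrix n n α}
  {B : ι → Matrix m m α}

theorem sum_mul_mul_conjTranspose_of_eq (hB : ∀ μ, B μ = Sᴴ * M μ * (2 • (L * X * H * S)))
    (hX : Xᴴ = X) (hH : Hᴴ = H) (ρ : Matrix m m α) :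
    ∑ μ, B μ * ρ * (B μ)ᴴ = 4 • (Sᴴ * krausMap M (L * (X * H * (S * ρ * Sᴴ) * H * X) * Lᴴ) * S) := by
  simp only [hB]
  rw [sum_mul_mul_conjTranspose_eq_krausMap, conjTranspose_conjTranspose,
    show (2 • (L * X * H * S) : Matrix n m α) * ρ * (2 • (L * X * H * S))ᴴ
        = 4 • (L * (X * H * (S * ρ * Sᴴ) * H * X) * Lᴴ) by
      simp only [conjTranspose_nsmul, conjTranspose_mul, hX, hH, Matrix.smul_mul, Matrix.mul_smul,
        smul_smul, Nat.reduceMul, Matrix.mul_assoc],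
    map_nsmul, Matrix.mul_smul, Matrix.smul_mul]

theorem sum_conjTranspose_mul_of_eq [DecidableEq n]
    (hB : ∀ μ, B μ = Sᴴ * M μ * (2 • (L * X * H * S))) (hX : Xᴴ = X) (hH : Hᴴ = H)
    (hM : ∑ μ, (M μ)ᴴ * (S * Sᴴ) * M μ = 1) (hXLX : X * (Lᴴ * L * X) = X) :
    ∑ μ, (B μ)ᴴ * B μ = 4 • (Sᴴ * (H * X * H) * S) := by
  simp only [hB]
  rw [sum_conjTranspose_mul_self_eq, conjTranspose_conjTranspose, hM, Matrix.mul_one]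
  calc (2 • (L * X * H * S))ᴴ * (2 • (L * X * H * S) : Matrix n m α)
      = 4 • (Sᴴ * H * (X * (Lᴴ * L * X)) * H * S) := by
        simp only [conjTranspose_nsmul, conjTranspose_mul, hX, hH, Matrix.smul_mul,
          Matrix.mul_smul, smul_smul, Nat.reduceMul, Matrix.mul_assoc]
    _ = 4 • (Sᴴ * (H * X * H) * S) := by
        rw [hXLX]
        simp only [Matrix.mul_assoc]

end Kraus

theorem map_mul_add_mul_eq_two_smul {𝕜 : Type*} [Field 𝕜] [CharZero 𝕜] [StarRing 𝕜]
    {Φ : Matrix n n 𝕜 →ₗ[𝕜] Matrix n n 𝕜} {L : Matrix n n 𝕜}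
    (hΦ : ∀ B, Φ (L * B * Lᴴ - (1 / 2 : 𝕜) • (Lᴴ * L * B + B * (Lᴴ * L))) = 0)
    (B : Matrix n n 𝕜) :
    Φ (Lᴴ * L * B + B * (Lᴴ * L)) = (2 : 𝕜) • Φ (L * B * Lᴴ) := by
  have h := hΦ B
  rw [map_sub, map_smul, sub_eq_zero] at h
  rw [h, smul_smul]
  norm_num

theorem conjTranspose_mul_map_sub_mul_eq {𝕜 : Type*} [Field 𝕜] [CharZero 𝕜] [StarRing 𝕜]
    [Fintype m] [DecidableEq m] {S : Matrix n m 𝕜} {L : Matrix n n 𝕜}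
    {Φ : Matrix n n 𝕜 →ₗ[𝕜] Matrix n n 𝕜} (hS : Sᴴ * S = 1)
    (hΦL : ∀ B, Φ (L * B * Lᴴ - (1 / 2 : 𝕜) • (Lᴴ * L * B + B * (Lᴴ * L))) = 0)
    (hΦr : ∀ B, Φ (B * (S * Sᴴ)) = S * Sᴴ * B * (S * Sᴴ))
    (hΦl : ∀ B, Φ (S * Sᴴ * B) = S * Sᴴ * B * (S * Sᴴ)) (Y E F : Matrix n n 𝕜)
    (ρ : Matrix m m 𝕜) :
    Sᴴ * Φ (2 • (Lᴴ * L * Y + Y * (Lᴴ * L)) - 2 • (E * (S * ρ * Sᴴ) + S * ρ * Sᴴ * F)) * S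
      = 4 • (Sᴴ * Φ (L * Y * Lᴴ) * S) - 2 • (Sᴴ * E * S * ρ + ρ * (Sᴴ * F * S)) := by
  have cancel (Z : Matrix m m 𝕜) : Sᴴ * (S * Z) = Z := by
    rw [← Matrix.mul_assoc, hS, Matrix.one_mul]
  have hright : Sᴴ * Φ (E * (S * ρ * Sᴴ)) * S = Sᴴ * E * S * ρ := by
    rw [← conj_mul_mul_conjTranspose hS, ← Matrix.mul_assoc, hΦr]
    simp only [Matrix.mul_assoc, cancel, hS, Matrix.mul_one]
  have hleft : Sᴴ * Φ (S * ρ * Sᴴ * F) * S = ρ * (Sᴴ * F * S) := by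
    rw [← mul_conjTranspose_mul_conj hS, Matrix.mul_assoc (S * Sᴴ), hΦl]
    simp only [Matrix.mul_assoc, cancel, hS, Matrix.mul_one]
  rw [map_sub, map_nsmul, map_nsmul, map_mul_add_mul_eq_two_smul hΦL, map_add, Matrix.mul_sub,
    Matrix.sub_mul, Matrix.mul_smul, Matrix.smul_mul, Matrix.mul_smul, Matrix.smul_mul,
    Matrix.mul_smul, Matrix.smul_mul, Matrix.mul_add, Matrix.add_mul, hright, hleft]
  module

end Matrix


theorem second_order_lindblad_general {n m ι : Type*} [Fintype n] [Fintype m] [Fintype ι]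
    [DecidableEq n] [DecidableEq m]
    (S₀ : Matrix n m ℂ) (hS₀ : S₀ᴴ * S₀ = 1)
    (L₀ : Matrix n n ℂ)
    (M : ι → Matrix n n ℂ)
    (R : Matrix n n ℂ → Matrix n n ℂ)
    (hR : ∀ A : Matrix n n ℂ, R A = ∑ μ, M μ * A * (M μ)ᴴ)
    (hR𝓛₀ : ∀ B : Matrix n n ℂ,
      R (L₀ * B * L₀ᴴ - (1 / 2 : ℂ) • (L₀ᴴ * L₀ * B + B * (L₀ᴴ * L₀))) = 0)
    (hRr : ∀ B : Matrix n n ℂ, R (B * (S₀ * S₀ᴴ)) = (S₀ * S₀ᴴ) * B * (S₀ * S₀ᴴ))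
    (hRl : ∀ B : Matrix n n ℂ, R ((S₀ * S₀ᴴ) * B) = (S₀ * S₀ᴴ) * B * (S₀ * S₀ᴴ))
    (hRP₀ : ∑ μ, (M μ)ᴴ * (S₀ * S₀ᴴ) * M μ = 1)
    (X : Matrix n n ℂ) (hX : Xᴴ = X)
    (hXinv : L₀ᴴ * L₀ * X = 1 - S₀ * S₀ᴴ)
    (hXinv' : X * (L₀ᴴ * L₀) = 1 - S₀ * S₀ᴴ)
    (hXP₀ : X * (S₀ * S₀ᴴ) = 0) (hP₀X : (S₀ * S₀ᴴ) * X = 0)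
    (H₁ : Matrix n n ℂ) (hH₁ : H₁ᴴ = H₁)
    (C₁ : Matrix n n ℂ)
    (hC₁ : C₁ = 2 • (X * H₁ * (S₀ * S₀ᴴ)) + 2 • ((S₀ * S₀ᴴ) * H₁ * X))
    (K₁ : Matrix m m ℂ → Matrix n n ℂ)
    (hK₁ : ∀ σ : Matrix m m ℂ,
      K₁ σ = (-Complex.I) • (C₁ * (S₀ * σ * S₀ᴴ) - (S₀ * σ * S₀ᴴ) * C₁))
    (𝓛s₁ : Matrix m m ℂ → Matrix m m ℂ)
    (h𝓛s₁ : ∀ σ : Matrix m m ℂ,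
      𝓛s₁ σ = (-Complex.I) • ((S₀ᴴ * H₁ * S₀) * σ - σ * (S₀ᴴ * H₁ * S₀)))
    (𝓛₁ : Matrix n n ℂ → Matrix n n ℂ)
    (h𝓛₁ : ∀ A : Matrix n n ℂ, 𝓛₁ A = (-Complex.I) • (H₁ * A - A * H₁))
    (B : ι → Matrix m m ℂ)
    (hB : ∀ μ, B μ = 2 • (S₀ᴴ * M μ * L₀ * X * H₁ * S₀))
    (ρ : Matrix m m ℂ) :
    S₀ᴴ * R (𝓛₁ (K₁ ρ) - K₁ (𝓛s₁ ρ)) * S₀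
      = (∑ μ, B μ * ρ * (B μ)ᴴ)
        - (1 / 2 : ℂ) • ((∑ μ, (B μ)ᴴ * B μ) * ρ + ρ * (∑ μ, (B μ)ᴴ * B μ)) := by
  obtain rfl : R = krausMap M := funext hR
  have hBV (μ : ι) : B μ = S₀ᴴ * M μ * (2 • (L₀ * X * H₁ * S₀)) := by
    rw [hB, Matrix.mul_smul]
    simp only [Matrix.mul_assoc]
  have hXLX : X * (L₀ᴴ * L₀ * X) = X := by
    rw [hXinv, Matrix.mul_sub, Matrix.mul_one, hXP₀, sub_zero]
  have hcomm : 𝓛₁ (K₁ ρ) - K₁ (𝓛s₁ ρ)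
      = ⁅C₁, S₀ * ⁅S₀ᴴ * H₁ * S₀, ρ⁆ * S₀ᴴ⁆ - ⁅H₁, ⁅C₁, S₀ * ρ * S₀ᴴ⁆⁆ := by
    simp only [h𝓛₁, hK₁, h𝓛s₁, Ring.lie_def, Matrix.mul_sub, Matrix.sub_mul, Matrix.mul_smul,
      Matrix.smul_mul, smul_sub, smul_smul, neg_mul_neg, Complex.I_mul_I, Matrix.mul_assoc]
    module
  rw [hcomm, conj_lie_eq_lie_conj hS₀,
    lie_lie_sub_lie_lie (isIdempotentElem_mul_conjTranspose hS₀) hXinv hXinv' hXP₀ hP₀X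
      (mul_conjTranspose_mul_conj hS₀ ρ) (conj_mul_mul_conjTranspose hS₀ ρ) hC₁,
    conjTranspose_mul_map_sub_mul_eq hS₀ hR𝓛₀ hRr hRl, conjTranspose_mul_sub_mul_mul_eq hS₀ hP₀X,
    conjTranspose_mul_sub_mul_mul_eq' hS₀ hXP₀, sum_mul_mul_conjTranspose_of_eq hBV hX hH₁,
    sum_conjTranspose_mul_of_eq hBV hX hH₁ hRP₀ hXLX, Matrix.smul_mul, Matrix.mul_smul]
  module

/-- Lemma 3: the second-order slow dynamics
`𝓛_{s,2}(ρ) = S₀† R(𝓛₁(K₁(ρ)) − K₁(𝓛_{s,1}(ρ))) S₀` admits a Lindbladian formulation with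
jump operators `B_μ = 2 S₀† M_μ L₀ (L₀†L₀)⁻¹ H₁ S₀`. -/
theorem second_order_lindblad {n m ι : Type*} [Fintype n] [Fintype m] [Fintype ι]
    [DecidableEq n] [DecidableEq m]
    (S₀ : Matrix n m ℂ) (hS₀ : S₀ᴴ * S₀ = 1)
    (L₀ : Matrix n n ℂ) (hL₀S₀ : L₀ * S₀ = 0)
    (M : ι → Matrix n n ℂ)
    (R : Matrix n n ℂ → Matrix n n ℂ)
    (hR : ∀ A : Matrix n n ℂ, R A = ∑ μ, M μ * A * (M μ)ᴴ)
    (hR𝓛₀ : ∀ B : Matrix n n ℂ,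
      R (L₀ * B * L₀ᴴ - (1 / 2 : ℂ) • (L₀ᴴ * L₀ * B + B * (L₀ᴴ * L₀))) = 0)
    (hRr : ∀ B : Matrix n n ℂ, R (B * (S₀ * S₀ᴴ)) = (S₀ * S₀ᴴ) * B * (S₀ * S₀ᴴ))
    (hRl : ∀ B : Matrix n n ℂ, R ((S₀ * S₀ᴴ) * B) = (S₀ * S₀ᴴ) * B * (S₀ * S₀ᴴ))
    (hRP₀ : ∑ μ, (M μ)ᴴ * (S₀ * S₀ᴴ) * M μ = 1)
    (X : Matrix n n ℂ) (hX : Xᴴ = X)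
    (hXinv : L₀ᴴ * L₀ * X = 1 - S₀ * S₀ᴴ)
    (hXinv' : X * (L₀ᴴ * L₀) = 1 - S₀ * S₀ᴴ)
    (hXP₀ : X * (S₀ * S₀ᴴ) = 0) (hP₀X : (S₀ * S₀ᴴ) * X = 0)
    (H₁ : Matrix n n ℂ) (hH₁ : H₁ᴴ = H₁)
    (C₁ : Matrix n n ℂ)
    (hC₁ : C₁ = 2 • (X * H₁ * (S₀ * S₀ᴴ)) + 2 • ((S₀ * S₀ᴴ) * H₁ * X))
    (K₁ : Matrix m m ℂ → Matrix n n ℂ)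
    (hK₁ : ∀ σ : Matrix m m ℂ,
      K₁ σ = (-Complex.I) • (C₁ * (S₀ * σ * S₀ᴴ) - (S₀ * σ * S₀ᴴ) * C₁))
    (𝓛s₁ : Matrix m m ℂ → Matrix m m ℂ)
    (h𝓛s₁ : ∀ σ : Matrix m m ℂ,
      𝓛s₁ σ = (-Complex.I) • ((S₀ᴴ * H₁ * S₀) * σ - σ * (S₀ᴴ * H₁ * S₀)))
    (𝓛₁ : Matrix n n ℂ → Matrix n n ℂ)
    (h𝓛₁ : ∀ A : Matrix n n ℂ, 𝓛₁ A = (-Complex.I) • (H₁ * A - A * H₁))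
    (B : ι → Matrix m m ℂ)
    (hB : ∀ μ, B μ = 2 • (S₀ᴴ * M μ * L₀ * X * H₁ * S₀))
    (ρ : Matrix m m ℂ) :
    S₀ᴴ * R (𝓛₁ (K₁ ρ) - K₁ (𝓛s₁ ρ)) * S₀
      = (∑ μ, B μ * ρ * (B μ)ᴴ)
        - (1 / 2 : ℂ) • ((∑ μ, (B μ)ᴴ * B μ) * ρ + ρ * (∑ μ, (B μ)ᴴ * B μ)) :=
  second_order_lindblad_general S₀ hS₀ L₀ M R hR hR𝓛₀ hRr hRl hRP₀ X hX hXinv hXinv' hXP₀ hP₀X H₁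
    hH₁ C₁ hC₁ K₁ hK₁ 𝓛s₁ h𝓛s₁ 𝓛₁ h𝓛₁ B hB ρ
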